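/- arXiv:2505.19506 — 2 statements merged into one kernel-verified Lean document; each statement's English description precedes it below -/
import Mathlib

section
/- Fix a node v of the quiet-zone graph with finite incoming-edge index set I and finite outgoing-edge index set O. Let y_in : I → ℝ and y_out : O → ℝ take values in {0,1}, let w ∈ {0,1}, and suppose the flow through v satisfies Σ_{i∈I} y_in(i) = Σ_{o∈O} y_out(o) = w. Let q_e, q_o, λ_e, λ_o, p, d ∈ ℝ with d ≥ 0, and let M > 0. Assume the side-traversal SOC constraint q_o·w = q_e·w + β·p·w − α·(d − p)·w and the side-length constraint (d·w)² ≥ (λ_o·w − λ_e·w)²·M². Define the auxiliary variables a'(i) = q_e·y_in(i), a(o) = q_o·y_out(o), c'(i) = λ_e·y_in(i), c(o) = λ_o·y_out(o), e = p·w, f = d·w. Then: (i) Σ_{o∈O} a(o) − Σ_{i∈I} a'(i) = β·e − α·(f − e); and (ii) setting S = Σ_{i∈I} c'(i) − Σ_{o∈O} c(o) and S_abs = f/M, one has S_abs ≥ S, S_abs ≥ −S, and S_abs ≥ 0. -/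
/-- Theorem 1 (flow constraints for the auxiliary variables): given a node `v`
with incoming-edge binary variables `y_in`, outgoing-edge binary variables `y_out`,
side-selection binary variable `w` with flow through `v` equal to `w`, the
side-traversal SOC constraint and the side-length constraint imply the flow
constraints for the auxiliary variables `a o = q_o * y_out o`, `a' i = q_e * y_in i`,
`c o = λ_o * y_out o`, `c' i = λ_e * y_in i`, `e = p * w`, `f = d * w`. -/
theorem stmt_0 {I O : Type*} [Fintype I] [Fintype O]
    (α β : ℝ)
    (y_in : I → ℝ) (y_out : O → ℝ) (w : ℝ)
    (hy_in : ∀ i, y_in i = 0 ∨ y_in i = 1)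
    (hy_out : ∀ o, y_out o = 0 ∨ y_out o = 1)
    (hw : w = 0 ∨ w = 1)
    (hflow_in : ∑ i, y_in i = w)
    (hflow_out : ∑ o, y_out o = w)
    (q_e q_o lam_e lam_o p d M : ℝ)
    (hd : 0 ≤ d) (hM : 0 < M)
    (hsoc : q_o * w = q_e * w + β * p * w - α * (d - p) * w)
    (hlen : (d * w) ^ 2 ≥ (lam_o * w - lam_e * w) ^ 2 * M ^ 2) :
    ((∑ o, q_o * y_out o) - (∑ i, q_e * y_in i)
        = β * (p * w) - α * (d * w - p * w)) ∧
    ((d * w) / M ≥ (∑ i, lam_e * y_in i) - (∑ o, lam_o * y_out o)) ∧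
    ((d * w) / M ≥ -((∑ i, lam_e * y_in i) - (∑ o, lam_o * y_out o))) ∧
    ((d * w) / M ≥ 0) := by
  have hsumo : (∑ o, q_o * y_out o) = q_o * w := by
    rw [← Finset.mul_sum, hflow_out]
  have hsumi : (∑ i, q_e * y_in i) = q_e * w := by
    rw [← Finset.mul_sum, hflow_in]
  have hsumlo : (∑ o, lam_o * y_out o) = lam_o * w := by
    rw [← Finset.mul_sum, hflow_out]
  have hsumli : (∑ i, lam_e * y_in i) = lam_e * w := by
    rw [← Finset.mul_sum, hflow_in]
  have hw0 : 0 ≤ w := by rcases hw with h|h <;> simp [h]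
  have hdw : 0 ≤ d * w := mul_nonneg hd hw0
  have hXM : ((lam_o * w - lam_e * w) * M) ^ 2 ≤ (d * w) ^ 2 := by nlinarith [hlen]
  have h1 : (lam_o * w - lam_e * w) * M ≤ d * w := by nlinarith [hXM, hdw]
  have h2 : -((lam_o * w - lam_e * w) * M) ≤ d * w := by nlinarith [hXM, hdw]
  have hA : lam_e * w - lam_o * w ≤ d * w / M := by
    rw [le_div_iff₀ hM]; nlinarith [h2]
  have hB : -(lam_e * w - lam_o * w) ≤ d * w / M := by
    rw [le_div_iff₀ hM]; nlinarith [h1]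
  refine ⟨?_, ?_, ?_, ?_⟩
  · rw [hsumo, hsumi]; linarith [hsoc]
  · rw [hsumli, hsumlo]; exact hA
  · rw [hsumli, hsumlo]; exact hB
  · exact div_nonneg hdw hM.le
end

section
/- Let E be a real normed vector space and let m_u, n_u, m_v, n_v ∈ E. Let y ∈ {0,1} ⊆ ℝ, let λ_o, λ_e, L ∈ ℝ, and set c = λ_o·y, c' = λ_e·y, l = L·y. Then l² ≥ ‖n_u·y + c·(m_u − n_u) − n_v·y − c'·(m_v − n_v)‖² holds if and only if (L·y)² ≥ y² · ‖(λ_o·m_u + (1 − λ_o)·n_u) − (λ_e·m_v + (1 − λ_e)·n_v)‖². -/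
/-- Equivalence between the bilinear length constraint (12) and the reformulated
conic length constraint (26) under the substitutions `c = λ_o·y`, `c' = λ_e·y`,
`l = L·y`, for binary `y`. -/
theorem stmt_5 {E : Type*} [NormedAddCommGroup E] [NormedSpace ℝ E]
    (m_u n_u m_v n_v : E) (y : ℝ) (hy : y = 0 ∨ y = 1)
    (lam_o lam_e L : ℝ) :
    ((L * y) ^ 2 ≥
      ‖y • n_u + (lam_o * y) • (m_u - n_u) - y • n_v - (lam_e * y) • (m_v - n_v)‖ ^ 2)
    ↔
    ((L * y) ^ 2 ≥
      y ^ 2 * ‖(lam_o • m_u + (1 - lam_o) • n_u) - (lam_e • m_v + (1 - lam_e) • n_v)‖ ^ 2) := by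
  have hv : y • n_u + (lam_o * y) • (m_u - n_u) - y • n_v - (lam_e * y) • (m_v - n_v)
      = y • ((lam_o • m_u + (1 - lam_o) • n_u) - (lam_e • m_v + (1 - lam_e) • n_v)) := by
    module
  rw [hv, norm_smul, Real.norm_eq_abs, mul_pow |y|, sq_abs]
end
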